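/- arXiv:1005.5075 — 3 statements merged into one kernel-verified Lean document; each statement's English description precedes it below -/
import Mathlib

section
/- If (M,g) is a Ỹ^x-manifold of dimension at least 2, then the defining condition in fact holds for every ε>0 (not only for sufficiently small ε): for all ε>0 there exist l>ε and y∈M such that every unit-speed geodesic from y at time l lies within ε of x. -/
/-!
We model a (geodesically) complete Riemannian manifold abstractly through its
unit tangent bundle: `M` is the underlying metric space (with the Riemannian
distance), `S` is the unit tangent bundle, `pr : S → M` is the footpoint
projection, and `flow : S → ℝ → S` is the geodesic flow.  The unit-speed
geodesic with initial unit tangent vector `v` is the curve `t ↦ pr (flow v t)`;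
in particular `pr (flow v t)` is `γ_v(t)` and `flow v t` is the velocity
`γ_v'(t)`.  The standing axioms are:
`hflow_zero` (initial condition), `hflow_add` (the flow property),
`hsurj` (every point has unit tangent vectors, i.e. `dim M ≥ 1`), and
`hlip` (unit-speed curves are 1-Lipschitz).  Continuity of `pr` and of the
geodesic flow are recorded by `hpr` and `hflow`.  Connectedness of the fibers
of `pr` (the unit spheres of the tangent spaces) encodes `dim M ≥ 2`.
-/

/-- If `(M,g)` is a `Ỹˣ`-manifold of dimension at least `2`,
then the defining condition holds for every `ε > 0`, not only for small `ε`. -/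
theorem tildeYx_all_epsilon
    {M : Type} [MetricSpace M] {S : Type} [TopologicalSpace S]
    (pr : S → M) (flow : S → ℝ → S)
    (hpr : Continuous pr)
    (hflow : Continuous fun p : S × ℝ => flow p.1 p.2)
    (hflow_zero : ∀ v, flow v 0 = v)
    (hflow_add : ∀ (v : S) (s t : ℝ), flow (flow v s) t = flow v (s + t))
    (hsurj : ∀ y : M, ∃ v, pr v = y)
    (hlip : ∀ (v : S) (s t : ℝ), dist (pr (flow v s)) (pr (flow v t)) ≤ |s - t|)
    (hdim : ∀ y : M, IsConnected {v : S | pr v = y})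
    [CompleteSpace M]
    (x : M)
    (htY : ∃ eb > (0 : ℝ), ∀ ε : ℝ, 0 < ε → ε < eb →
      ∃ L : ℝ, ε < L ∧ ∃ y : M, ∀ v, pr v = y → dist (pr (flow v L)) x < ε) :
    ∀ ε : ℝ, 0 < ε →
      ∃ L : ℝ, ε < L ∧ ∃ y : M, ∀ v, pr v = y → dist (pr (flow v L)) x < ε := by
  obtain ⟨eb, heb, h⟩ := htY
  intro ε hε
  set δ : ℝ := min ε eb / 2 with hδdef
  have hδpos : 0 < δ := by positivity
  have hδeb : δ < eb := by
    have : min ε eb ≤ eb := min_le_right _ _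
    have h2 : min ε eb / 2 < eb := by linarith
    simpa [hδdef] using h2
  have hδε : δ ≤ ε / 2 := by
    have : min ε eb ≤ ε := min_le_left _ _
    simp only [hδdef]; linarith
  obtain ⟨L, hL, y, hy⟩ := h δ hδpos hδeb
  refine ⟨L + (ε - δ), by linarith, y, fun v hv => ?_⟩
  have h1 := hlip v (L + (ε - δ)) L
  have h2 := hy v hv
  have h3 : dist (pr (flow v (L + (ε - δ)))) x ≤
      dist (pr (flow v (L + (ε - δ)))) (pr (flow v L)) + dist (pr (flow v L)) x :=
    dist_triangle _ _ _
  have habs : |L + (ε - δ) - L| = ε - δ := by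
    rw [abs_of_nonneg] <;> linarith
  rw [habs] at h1
  linarith
end

section
/- Let ρ:(M̃,g̃)→(M,g) be a Riemannian covering between connected manifolds of dimension at least 2, and x∈M̃. If (M̃,g̃) is a Ỹ^x-manifold then (M,g) is a Ỹ^{ρ(x)}-manifold. -/
/-!
We model a (geodesically) complete Riemannian manifold abstractly through its
unit tangent bundle: `M` is the underlying metric space (with the Riemannian
distance), `S` is the unit tangent bundle, `pr : S → M` is the footpoint
projection, and `flow : S → ℝ → S` is the geodesic flow.  The unit-speed
geodesic with initial unit tangent vector `v` is the curve `t ↦ pr (flow v t)`;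
in particular `pr (flow v t)` is `γ_v(t)` and `flow v t` is the velocity
`γ_v'(t)`.  The standing axioms are:
`hflow_zero` (initial condition), `hflow_add` (the flow property),
`hsurj` (every point has unit tangent vectors, i.e. `dim M ≥ 1`), and
`hlip` (unit-speed curves are 1-Lipschitz).  Continuity of `pr` and of the
geodesic flow are recorded by `hpr` and `hflow`.  Connectedness of the fibers
of `pr` (the unit spheres of the tangent spaces) encodes `dim M ≥ 2`.
-/

/-!
A Riemannian covering `ρ : M' → M` is modeled by a topological covering map
`ρ` that is a local isometry (`hloc`, with `hρlip` recording that it does not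
increase distances), together with the induced map `Dρ` on unit tangent
bundles, which commutes with footpoint projections (`hcomm`) and with the
geodesic flows (`hflowcomm`), and which identifies unit spheres over points of
a common fiber (`hlift`: geodesics lift uniquely).
-/

/-- If the total space `(M',g')` of a Riemannian covering
`ρ : M' → M` (dimension at least `2`) is a `Ỹˣ`-manifold, then `(M,g)` is a
`Ỹ^{ρ x}`-manifold. -/
theorem covering_total_tildeY_implies_base
    {M' : Type} [MetricSpace M'] {M : Type} [MetricSpace M]
    [ConnectedSpace M'] [ConnectedSpace M]
    {S' : Type} [TopologicalSpace S'] {S : Type} [TopologicalSpace S]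
    (pr' : S' → M') (flow' : S' → ℝ → S')
    (pr : S → M) (flow : S → ℝ → S)
    (hpr' : Continuous pr')
    (hflow' : Continuous fun p : S' × ℝ => flow' p.1 p.2)
    (hflow_zero' : ∀ v, flow' v 0 = v)
    (hflow_add' : ∀ (v : S') (s t : ℝ), flow' (flow' v s) t = flow' v (s + t))
    (hsurj' : ∀ y : M', ∃ v, pr' v = y)
    (hlip' : ∀ (v : S') (s t : ℝ), dist (pr' (flow' v s)) (pr' (flow' v t)) ≤ |s - t|)
    (hpr : Continuous pr)
    (hflow : Continuous fun p : S × ℝ => flow p.1 p.2)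
    (hflow_zero : ∀ v, flow v 0 = v)
    (hflow_add : ∀ (v : S) (s t : ℝ), flow (flow v s) t = flow v (s + t))
    (hsurj : ∀ y : M, ∃ v, pr v = y)
    (hlip : ∀ (v : S) (s t : ℝ), dist (pr (flow v s)) (pr (flow v t)) ≤ |s - t|)
    (hdim' : ∀ y : M', IsConnected {v : S' | pr' v = y})
    (hdim : ∀ y : M, IsConnected {v : S | pr v = y})
    (ρ : M' → M) (Dρ : S' → S)
    (hcov : IsCoveringMap ρ)
    (hcomm : ∀ v, pr (Dρ v) = ρ (pr' v))
    (hflowcomm : ∀ (v : S') (t : ℝ), Dρ (flow' v t) = flow (Dρ v) t)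
    (hlift : ∀ (v : S) (y' : M'), ρ y' = pr v →
      ∃! v' : S', pr' v' = y' ∧ Dρ v' = v)
    (hρlip : LipschitzWith 1 ρ)
    (hloc : ∀ a : M', ∃ r > (0 : ℝ), ∀ b c : M',
      dist a b < r → dist a c < r → dist (ρ b) (ρ c) = dist b c)
    (x : M')
    (htY : ∃ eb > (0 : ℝ), ∀ ε : ℝ, 0 < ε → ε < eb →
      ∃ L : ℝ, ε < L ∧ ∃ y : M', ∀ v, pr' v = y →
        dist (pr' (flow' v L)) x < ε) :
    ∃ eb > (0 : ℝ), ∀ ε : ℝ, 0 < ε → ε < eb →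
      ∃ L : ℝ, ε < L ∧ ∃ y : M, ∀ v, pr v = y →
        dist (pr (flow v L)) (ρ x) < ε := by
  obtain ⟨eb, heb, h⟩ := htY
  refine ⟨eb, heb, fun ε hε hεeb => ?_⟩
  obtain ⟨L, hL, y', hy'⟩ := h ε hε hεeb
  refine ⟨L, hL, ρ y', fun v hv => ?_⟩
  obtain ⟨v', ⟨hpv', hDv'⟩, -⟩ := hlift v y' hv.symm
  have key : pr (flow v L) = ρ (pr' (flow' v' L)) := by
    rw [← hDv', ← hflowcomm, hcomm]
  rw [key]
  calc dist (ρ (pr' (flow' v' L))) (ρ x) ≤ dist (pr' (flow' v' L)) x := by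
        simpa using hρlip.dist_le_mul _ _
    _ < ε := hy' v' hpv'
end

section
/- Let ρ:(M̃,g̃)→(M,g) be a Riemannian covering with dim M ≥ 2 and x∈M̃. If (M,g) is a Ỹ^{ρ(x)}-manifold, then (M̃,g̃) is a Ỹ^x-manifold. -/
/-!
We model a (geodesically) complete Riemannian manifold abstractly through its
unit tangent bundle: `M` is the underlying metric space (with the Riemannian
distance), `S` is the unit tangent bundle, `pr : S → M` is the footpoint
projection, and `flow : S → ℝ → S` is the geodesic flow.  The unit-speed
geodesic with initial unit tangent vector `v` is the curve `t ↦ pr (flow v t)`;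
in particular `pr (flow v t)` is `γ_v(t)` and `flow v t` is the velocity
`γ_v'(t)`.  The standing axioms are:
`hflow_zero` (initial condition), `hflow_add` (the flow property),
`hsurj` (every point has unit tangent vectors, i.e. `dim M ≥ 1`), and
`hlip` (unit-speed curves are 1-Lipschitz).  Continuity of `pr` and of the
geodesic flow are recorded by `hpr` and `hflow`.  Connectedness of the fibers
of `pr` (the unit spheres of the tangent spaces) encodes `dim M ≥ 2`.
-/

/-!
A Riemannian covering `ρ : M' → M` is modeled by a topological covering map
`ρ` that is a local isometry (`hloc`, with `hρlip` recording that it does not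
increase distances), together with the induced map `Dρ` on unit tangent
bundles, which commutes with footpoint projections (`hcomm`) and with the
geodesic flows (`hflowcomm`), and which identifies unit spheres over points of
a common fiber (`hlift`: geodesics lift uniquely).
-/

/-- If the base `(M,g)` of a Riemannian covering `ρ : M' → M`
(dimension at least `2`) is a `Ỹ^{ρ x}`-manifold, then the total space
`(M',g')` is a `Ỹˣ`-manifold. -/
theorem covering_base_tildeY_implies_total
    {M' : Type} [MetricSpace M'] {M : Type} [MetricSpace M]
    [ConnectedSpace M'] [ConnectedSpace M]
    {S' : Type} [TopologicalSpace S'] {S : Type} [TopologicalSpace S]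
    (pr' : S' → M') (flow' : S' → ℝ → S')
    (pr : S → M) (flow : S → ℝ → S)
    (hpr' : Continuous pr')
    (hflow' : Continuous fun p : S' × ℝ => flow' p.1 p.2)
    (hflow_zero' : ∀ v, flow' v 0 = v)
    (hflow_add' : ∀ (v : S') (s t : ℝ), flow' (flow' v s) t = flow' v (s + t))
    (hsurj' : ∀ y : M', ∃ v, pr' v = y)
    (hlip' : ∀ (v : S') (s t : ℝ), dist (pr' (flow' v s)) (pr' (flow' v t)) ≤ |s - t|)
    (hpr : Continuous pr)
    (hflow : Continuous fun p : S × ℝ => flow p.1 p.2)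
    (hflow_zero : ∀ v, flow v 0 = v)
    (hflow_add : ∀ (v : S) (s t : ℝ), flow (flow v s) t = flow v (s + t))
    (hsurj : ∀ y : M, ∃ v, pr v = y)
    (hlip : ∀ (v : S) (s t : ℝ), dist (pr (flow v s)) (pr (flow v t)) ≤ |s - t|)
    (hdim' : ∀ y : M', IsConnected {v : S' | pr' v = y})
    (hdim : ∀ y : M, IsConnected {v : S | pr v = y})
    (ρ : M' → M) (Dρ : S' → S)
    (hcov : IsCoveringMap ρ)
    (hcomm : ∀ v, pr (Dρ v) = ρ (pr' v))
    (hflowcomm : ∀ (v : S') (t : ℝ), Dρ (flow' v t) = flow (Dρ v) t)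
    (hlift : ∀ (v : S) (y' : M'), ρ y' = pr v →
      ∃! v' : S', pr' v' = y' ∧ Dρ v' = v)
    (hρlip : LipschitzWith 1 ρ)
    (hloc : ∀ a : M', ∃ r > (0 : ℝ), ∀ b c : M',
      dist a b < r → dist a c < r → dist (ρ b) (ρ c) = dist b c)
    (x : M')
    (htY : ∃ eb > (0 : ℝ), ∀ ε : ℝ, 0 < ε → ε < eb →
      ∃ L : ℝ, ε < L ∧ ∃ y : M, ∀ v, pr v = y →
        dist (pr (flow v L)) (ρ x) < ε) :
    ∃ eb > (0 : ℝ), ∀ ε : ℝ, 0 < ε → ε < eb →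
      ∃ L : ℝ, ε < L ∧ ∃ y : M', ∀ v, pr' v = y →
        dist (pr' (flow' v L)) x < ε := by

  obtain ⟨eb₀, heb₀, H0⟩ := htY
  obtain ⟨r, hr, hrloc⟩ := hloc x
  obtain ⟨e, hxe, hρe⟩ := hcov.isLocalHomeomorph x
  have hx_tgt : ρ x ∈ e.target := by rw [hρe]; exact e.map_source hxe
  have hsymmx : e.symm (ρ x) = x := by rw [hρe]; exact e.left_inv hxe
  have hcontsymm : ContinuousAt e.symm (ρ x) := e.continuousAt_symm hx_tgt
  obtain ⟨δ₁, hδ₁, hδ₁prop⟩ := Metric.continuousAt_iff.mp hcontsymm r hr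
  obtain ⟨δ₂, hδ₂, hδ₂prop⟩ := Metric.isOpen_iff.mp e.open_target _ hx_tgt
  refine ⟨min eb₀ (min (min δ₁ δ₂) r),
    lt_min heb₀ (lt_min (lt_min hδ₁ hδ₂) hr), ?_⟩
  intro ε hε hεlt
  have hε0 : ε < eb₀ := lt_of_lt_of_le hεlt (min_le_left _ _)
  have hεδ₁ : ε < δ₁ :=
    lt_of_lt_of_le hεlt (le_trans (le_trans (min_le_right _ _)
      (min_le_left _ _)) (min_le_left _ _))
  have hεδ₂ : ε < δ₂ :=
    lt_of_lt_of_le hεlt (le_trans (le_trans (min_le_right _ _)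
      (min_le_left _ _)) (min_le_right _ _))
  have hεr : ε < r :=
    lt_of_lt_of_le hεlt (le_trans (min_le_right _ _) (min_le_right _ _))
  obtain ⟨L, hL, y, hY⟩ := H0 ε hε hε0
  obtain ⟨v0, hv0⟩ := hsurj y
  have hp : dist (pr (flow v0 L)) (ρ x) < ε := hY v0 hv0
  set p := pr (flow v0 L) with hpdef
  have hp_tgt : p ∈ e.target := hδ₂prop (Metric.mem_ball.mpr (lt_trans hp hεδ₂))
  have hρp' : ρ (e.symm p) = p := by rw [hρe]; exact e.right_inv hp_tgt
  have hp'x : dist (e.symm p) x < r := by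
    have h := hδ₁prop (show dist p (ρ x) < δ₁ from lt_trans hp hεδ₁)
    rwa [hsymmx] at h
  obtain ⟨w', ⟨hw'pr, hw'D⟩, -⟩ := hlift (flow v0 L) (e.symm p) hρp'
  set u' := flow' w' (-L) with hu'def
  set y' := pr' u' with hy'def
  refine ⟨L, hL, y', ?_⟩
  have hρy' : ρ y' = y := by
    rw [hy'def, ← hcomm, hu'def, hflowcomm, hw'D, hflow_add, add_neg_cancel,
      hflow_zero, hv0]
  have hu'end : pr' (flow' u' L) = e.symm p := by
    rw [hu'def, hflow_add', neg_add_cancel, hflow_zero', hw'pr]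
  -- key: local isometry near x
  have hkey : ∀ b : M', dist b x < r → dist b x = dist (ρ b) (ρ x) := by
    intro b hb
    have h := hrloc b x (by rwa [dist_comm] at hb) (by simpa using hr)
    exact h.symm
  -- every lifted geodesic from y' whose endpoint is r-close to x is ε-close
  have hsmall : ∀ v' : S', pr' v' = y' →
      dist (pr' (flow' v' L)) x < r → dist (pr' (flow' v' L)) x < ε := by
    intro v' hv' hd
    have hb : dist (pr (flow (Dρ v') L)) (ρ x) < ε := by
      refine hY (Dρ v') ?_
      rw [hcomm, hv', hρy']
    have hρend : ρ (pr' (flow' v' L)) = pr (flow (Dρ v') L) := by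
      rw [← hcomm, hflowcomm]
    rw [hkey _ hd, hρend]
    exact hb
  -- dichotomy on the fiber
  have hdich : ∀ v' : S', pr' v' = y' →
      dist (pr' (flow' v' L)) x < ε ∨ ε < dist (pr' (flow' v' L)) x := by
    intro v' hv'
    by_cases hd : dist (pr' (flow' v' L)) x < r
    · exact Or.inl (hsmall v' hv' hd)
    · exact Or.inr (lt_of_lt_of_le hεr (not_lt.mp hd))
  have hFcont : Continuous fun v' : S' => dist (pr' (flow' v' L)) x :=
    (hpr'.comp (hflow'.comp (continuous_id.prodMk continuous_const))).dist
      continuous_const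
  have hUopen : IsOpen {v' : S' | dist (pr' (flow' v' L)) x < ε} :=
    isOpen_lt hFcont continuous_const
  have hVopen : IsOpen {v' : S' | ε < dist (pr' (flow' v' L)) x} :=
    isOpen_lt continuous_const hFcont
  have hu'U : dist (pr' (flow' u' L)) x < ε := by
    rw [hu'end, hkey _ hp'x, hρp']
    exact hp
  intro v' hv'
  by_contra hcon
  have hv'V : ε < dist (pr' (flow' v' L)) x := by
    rcases hdich v' hv' with h | h
    · exact absurd h hcon
    · exact h
  obtain ⟨z, hz, hzU, hzV⟩ := (hdim' y').isPreconnected _ _ hUopen hVopen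
    (fun w hw => hdich w hw) ⟨u', hy'def.symm ▸ rfl, hu'U⟩ ⟨v', hv', hv'V⟩
  simp only [Set.mem_setOf_eq] at hzU hzV
  exact lt_asymm hzU hzV
end
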